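/- Let 𝒜 = {H₁, …, H_m} be a hyperplane arrangement in ℝⁿ with H_i = {x : ⟨α_i, x⟩ = b_i}, ordered by H₁ ≺ ⋯ ≺ H_m, and let its coning c𝒜 in ℝⁿ⁺¹ be ordered by cH₁ ≺ ⋯ ≺ cH_m ≺ K₀. Then for every S ⊆ {1, …, m}, the set {H_i : i ∈ S} is an affine NBC subset of 𝒜 if and only if both {cH_i : i ∈ S} and {cH_i : i ∈ S} ∪ {K₀} are affine NBC subsets of c𝒜. -/

import Mathlib

open Set

/-- An affine hyperplane in `ℝⁿ`, given by a nonzero normal vector `a` and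
a constant `b`: the hyperplane is `{x : ⟨a, x⟩ = b}`. -/
structure Hyp (n : ℕ) where
  a : Fin n → ℝ
  b : ℝ
  ha : a ≠ 0

/-- The hyperplane itself, as a subset of `ℝⁿ`. -/
def Hyp.carrier {n : ℕ} (H : Hyp n) : Set (Fin n → ℝ) := {x | ∑ i, H.a i * x i = H.b}

/-- The positive open side of a hyperplane. -/
def Hyp.pos {n : ℕ} (H : Hyp n) : Set (Fin n → ℝ) := {x | H.b < ∑ i, H.a i * x i}

/-- The negative open side of a hyperplane. -/
def Hyp.neg {n : ℕ} (H : Hyp n) : Set (Fin n → ℝ) := {x | ∑ i, H.a i * x i < H.b}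

/-- The intersection `⋂ℬ` of the hyperplanes indexed by `S` (`ℝⁿ` if `S = ∅`). -/
def interA {n m : ℕ} (H : Fin m → Hyp n) (S : Finset (Fin m)) : Set (Fin n → ℝ) :=
  ⋂ i ∈ S, (H i).carrier

/-- The dimension of an affine subset of `ℝⁿ` (the rank of its vector span). -/
noncomputable def adim {n : ℕ} (s : Set (Fin n → ℝ)) : ℕ :=
  Module.finrank ℝ (vectorSpan ℝ s)

/-- The defining property of an affine circuit: `⋂ℬ ≠ ∅` and `dim(⋂ℬ) + |ℬ| = n + 1`. -/
def CircuitProp {n m : ℕ} (H : Fin m → Hyp n) (S : Finset (Fin m)) : Prop :=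
  (interA H S).Nonempty ∧ adim (interA H S) + S.card = n + 1

/-- An affine circuit: an inclusion-minimal `S` with `⋂S ≠ ∅` and `dim(⋂S) + |S| = n + 1`. -/
def IsAffCircuit {n m : ℕ} (H : Fin m → Hyp n) (S : Finset (Fin m)) : Prop :=
  CircuitProp H S ∧ ∀ T ⊂ S, ¬ CircuitProp H T

/-- An affine NBC subset: `⋂S ≠ ∅` and `S` contains no affine broken circuit, i.e. no
affine circuit with its maximal element deleted. -/
def IsAffNBC {n m : ℕ} (H : Fin m → Hyp n) (S : Finset (Fin m)) : Prop :=
  (interA H S).Nonempty ∧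
    ∀ T : Finset (Fin m), IsAffCircuit H T → ∀ h : T.Nonempty, ¬ T.erase (T.max' h) ⊆ S

/-- `Δ` is a region of the open set `U`, i.e. a connected component of `U`. -/
def IsRegionIn {n : ℕ} (U Δ : Set (Fin n → ℝ)) : Prop :=
  ∃ x ∈ U, Δ = connectedComponentIn U x

/-- The set of regions of the arrangement `H`: connected components of the complement
of the union of the hyperplanes. -/
def regions {n m : ℕ} (H : Fin m → Hyp n) : Set (Set (Fin n → ℝ)) :=
  {Δ | IsRegionIn (Set.univ \ ⋃ i, (H i).carrier) Δ}

/-- The cone `cH` of the hyperplane `H : ⟨a, x⟩ = b`: the linear hyperplane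
`{(x, t) : ⟨a, x⟩ = b·t}` in `ℝⁿ⁺¹`. -/
def coneHyp {n : ℕ} (H : Hyp n) : Hyp (n + 1) where
  a := Fin.snoc H.a (-H.b)
  b := 0
  ha := by
    intro h
    apply H.ha
    funext j
    have := congrFun h (Fin.castSucc j)
    simpa using this

/-- The extra hyperplane `K₀ : t = 0` of the coning. -/
def K0 (n : ℕ) : Hyp (n + 1) where
  a := Fin.snoc 0 1
  b := 0
  ha := by
    intro h
    have := congrFun h (Fin.last n)
    simp at this

/-- The coning `c𝒜` of the arrangement `𝒜 = {H₁, …, H_m}` in `ℝⁿ`: the arrangement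
`{cH₁, …, cH_m, K₀}` in `ℝⁿ⁺¹`, with `K₀` listed last. -/
def coneArr {n m : ℕ} (H : Fin m → Hyp n) : Fin (m + 1) → Hyp (n + 1) :=
  Fin.snoc (fun i => coneHyp (H i)) (K0 n)

/-!
Coning linearises everything: `⋂_{i ∈ T} cHᵢ` is the common kernel of the normal vectors
`cᵢ = (αᵢ, -bᵢ)` (and `e = (0, 1)` for `K₀`), so the affine circuits of `c𝒜` are exactly the
circuits of the linear matroid of these normals. The system `{Hᵢ : i ∈ S}` is consistent iff
`e ∉ span {cᵢ : i ∈ S}`, and then dropping the last coordinate is injective on that span, so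
`dim ⋂ S` can be computed upstairs; hence the affine circuits of `𝒜` are the circuits of `c𝒜`
avoiding `K₀` whose span misses `e`. Since `K₀` is the largest element, a broken circuit of `c𝒜`
inside `cS ∪ {K₀}` either puts `e` into the span of `cS`, making `S` inconsistent, or comes from
a broken circuit of `𝒜` inside `S`.
-/

open Module Submodule

section LinearRank

variable (K : Type*) {V ι : Type*} [Field K] [AddCommGroup V] [Module K V]

noncomputable def linRank (v : ι → V) (T : Finset ι) : ℕ :=
  finrank K (span K (v '' T))

/-- A circuit of the linear matroid of `v`, in the rank form used by `IsAffCircuit`. -/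
def IsLinCircuit (v : ι → V) (C : Finset ι) : Prop :=
  C.card = linRank K v C + 1 ∧ ∀ C' ⊂ C, C'.card ≠ linRank K v C' + 1

variable {K} {v : ι → V}

lemma linRank_le_card (T : Finset ι) : linRank K v T ≤ T.card := by
  classical
  rw [linRank, ← Finset.coe_image]
  exact (finrank_span_finset_le_card _).trans Finset.card_image_le

lemma linRank_mono {T T' : Finset ι} (h : T ⊆ T') : linRank K v T ≤ linRank K v T' :=
  have := FiniteDimensional.span_of_finite K (T'.finite_toSet.image v)
  finrank_mono (span_mono (image_mono h))

lemma linRank_insert_of_mem_span [DecidableEq ι] {T : Finset ι} {x : ι}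
    (hx : v x ∈ span K (v '' T)) : linRank K v (insert x T) = linRank K v T := by
  rw [linRank, Finset.coe_insert, image_insert_eq, span_insert_eq_span hx, linRank]

lemma exists_isLinCircuit_subset {T : Finset ι} (hT : linRank K v T < T.card) :
    ∃ C ⊆ T, IsLinCircuit K v C := by
  classical
  obtain ⟨C, hCT, hmin⟩ :=
    exists_minimal_le_of_wellFoundedLT (fun C => linRank K v C < C.card) T hT
  have hindep : ∀ C' ⊂ C, linRank K v C' = C'.card := fun C' hC' =>
    (linRank_le_card C').antisymm (not_lt.1 fun h => hC'.not_subset (hmin.2 h hC'.subset))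
  obtain ⟨x, hx⟩ : C.Nonempty := Finset.card_pos.1 (by have := hmin.1; omega)
  have herase := hindep _ (Finset.erase_ssubset hx)
  have hmono := linRank_mono (K := K) (v := v) (Finset.erase_subset x C)
  rw [Finset.card_erase_of_mem hx] at herase
  exact ⟨C, hCT, by have := hmin.1; omega, fun C' hC' => by rw [hindep C' hC']; omega⟩

namespace IsLinCircuit

variable {C : Finset ι}

lemma nonempty (hC : IsLinCircuit K v C) : C.Nonempty :=
  Finset.card_pos.1 (by rw [hC.1]; omega)

lemma linRank_of_ssubset (hC : IsLinCircuit K v C) {C' : Finset ι} (hC' : C' ⊂ C) :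
    linRank K v C' = C'.card := by
  classical
  refine (linRank_le_card C').antisymm (not_lt.1 fun h => ?_)
  obtain ⟨D, hDC', hD⟩ := exists_isLinCircuit_subset h
  exact hC.2 D (Finset.ssubset_of_subset_of_ssubset hDC' hC') hD.1

lemma span_erase [DecidableEq ι] (hC : IsLinCircuit K v C) {x : ι} (hx : x ∈ C) :
    span K (v '' ↑(C.erase x)) = span K (v '' C) := by
  have := FiniteDimensional.span_of_finite K (C.finite_toSet.image v)
  have hrank := hC.linRank_of_ssubset (Finset.erase_ssubset hx)
  rw [Finset.card_erase_of_mem hx] at hrank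
  refine eq_of_le_of_finrank_eq (span_mono (image_mono (Finset.erase_subset x C))) ?_
  have := hC.1
  rw [linRank] at *
  omega

end IsLinCircuit

end LinearRank

section Arrangement

variable {n m : ℕ}

def normals (H : Fin m → Hyp n) (i : Fin m) : Fin n → ℝ := (H i).a

lemma mem_interA {H : Fin m → Hyp n} {S : Finset (Fin m)} {x : Fin n → ℝ} :
    x ∈ interA H S ↔ ∀ i ∈ S, normals H i ⬝ᵥ x = (H i).b := by
  simp [interA, Hyp.carrier, normals, dotProduct]

lemma interA_anti (H : Fin m → Hyp n) {S T : Finset (Fin m)} (h : S ⊆ T) :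
    interA H T ⊆ interA H S :=
  biInter_subset_biInter_left h

lemma vectorSpan_interA {H : Fin m → Hyp n} {S : Finset (Fin m)} {x₀ : Fin n → ℝ}
    (hx₀ : x₀ ∈ interA H S) :
    vectorSpan ℝ (interA H S) =
      ((span ℝ (normals H '' S)).map
        (dotProductEquiv ℝ (Fin n)).toLinearMap).dualCoannihilator := by
  rw [vectorSpan, map_span, ← span_eq (dualCoannihilator _)]
  congr 1
  ext w
  simp only [coe_dualCoannihilator_span, mem_ofPred_eq, ← image_comp, forall_mem_image,
    Function.comp_apply, LinearEquiv.coe_coe, dotProductEquiv_apply_apply]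
  constructor
  · rintro ⟨x, hx, y, hy, rfl⟩ i hi
    change normals H i ⬝ᵥ (x - y) = 0
    rw [dotProduct_sub, mem_interA.1 hx i hi, mem_interA.1 hy i hi, sub_self]
  · intro hw
    refine ⟨x₀ + w, mem_interA.2 fun i hi => ?_, x₀, hx₀, add_sub_cancel_left x₀ w⟩
    rw [dotProduct_add, mem_interA.1 hx₀ i hi, hw hi, add_zero]

lemma adim_interA_add_linRank {H : Fin m → Hyp n} {S : Finset (Fin m)}
    (hne : (interA H S).Nonempty) : adim (interA H S) + linRank ℝ (normals H) S = n := by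
  obtain ⟨x₀, hx₀⟩ := hne
  have h := Subspace.finrank_add_finrank_dualCoannihilator_eq
    ((span ℝ (normals H '' S)).map (dotProductEquiv ℝ (Fin n)).toLinearMap)
  rw [LinearEquiv.finrank_map_eq, finrank_fin_fun] at h
  rw [adim, vectorSpan_interA hx₀, linRank]
  omega

lemma circuitProp_iff {H : Fin m → Hyp n} {S : Finset (Fin m)} :
    CircuitProp H S ↔ (interA H S).Nonempty ∧ S.card = linRank ℝ (normals H) S + 1 := by
  refine and_congr_right fun hne => ?_
  have := adim_interA_add_linRank hne
  omega

end Arrangement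

lemma snoc_dotProduct_snoc {R : Type*} [NonUnitalNonAssocSemiring R] {n : ℕ} (a x : Fin n → R)
    (c t : R) : (Fin.snoc a c : Fin (n + 1) → R) ⬝ᵥ Fin.snoc x t = a ⬝ᵥ x + c * t := by
  simp [dotProduct, Fin.sum_univ_castSucc]

section Duality

variable {K ι : Type*} [Field K] [Fintype ι] [DecidableEq ι]

lemma notMem_span_iff_exists_dotProduct {s : Set (ι → K)} {e : ι → K} :
    e ∉ span K s ↔ ∃ y, (∀ w ∈ s, w ⬝ᵥ y = 0) ∧ e ⬝ᵥ y ≠ 0 := by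
  constructor
  · intro he
    obtain ⟨f, hfe, hf⟩ := exists_dual_map_eq_bot_of_notMem he inferInstance
    have hf_apply : ∀ w, w ⬝ᵥ (dotProductEquiv K ι).symm f = f w := fun w => by
      rw [dotProduct_comm, ← dotProductEquiv_apply_apply, LinearEquiv.apply_symm_apply]
    refine ⟨(dotProductEquiv K ι).symm f, fun w hw => ?_, by rwa [hf_apply]⟩
    rw [hf_apply, ← mem_bot K, ← hf]
    exact mem_map_of_mem (subset_span hw)
  · rintro ⟨y, hy, hey⟩ he
    have hker : span K s ≤ LinearMap.ker (dotProductEquiv K ι y) := span_le.2 fun w hw => by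
      simp [dotProduct_comm y, hy w hw]
    exact hey (by simpa [dotProduct_comm y] using hker he)

lemma finrank_map_init_of_snoc_notMem {n : ℕ} {W : Submodule K (Fin (n + 1) → K)}
    (he : (Fin.snoc 0 1 : Fin (n + 1) → K) ∉ W) :
    finrank K (W.map (LinearMap.funLeft K K Fin.castSucc)) = finrank K W := by
  set π := LinearMap.funLeft K K (Fin.castSucc : Fin n → Fin (n + 1))
  have hker : LinearMap.ker (π.domRestrict W) = ⊥ := by
    refine LinearMap.ker_eq_bot'.2 fun ⟨w, hw⟩ hπ => ?_
    have hw_eq : w = w (Fin.last n) • Fin.snoc 0 1 := by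
      ext j
      induction j using Fin.lastCases with
      | last => simp
      | cast j => simpa [π] using congrFun hπ j
    by_cases h0 : w (Fin.last n) = 0
    · exact Subtype.ext (hw_eq.trans (by rw [h0, zero_smul]; rfl))
    · refine absurd ?_ he
      rw [← inv_smul_smul₀ h0 (Fin.snoc 0 1), ← hw_eq]
      exact W.smul_mem _ hw
  have h := LinearMap.finrank_range_add_finrank_ker (π.domRestrict W)
  rw [hker, finrank_bot, add_zero, LinearMap.range_domRestrict] at h
  exact h

end Duality

section Coning

variable {n m : ℕ} {H : Fin m → Hyp n}

lemma normals_coneArr_castSucc (i : Fin m) :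
    normals (coneArr H) i.castSucc = Fin.snoc (H i).a (-(H i).b) := by
  simp [normals, coneArr, coneHyp]

lemma normals_coneArr_last : normals (coneArr H) (Fin.last m) = Fin.snoc 0 1 := by
  simp [normals, coneArr, K0]

lemma zero_mem_interA_coneArr (T : Finset (Fin (m + 1))) : 0 ∈ interA (coneArr H) T := by
  refine mem_interA.2 fun i _ => ?_
  induction i using Fin.lastCases <;> simp [coneArr, coneHyp, K0]

lemma isAffCircuit_coneArr_iff {T : Finset (Fin (m + 1))} :
    IsAffCircuit (coneArr H) T ↔ IsLinCircuit ℝ (normals (coneArr H)) T := by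
  have hne (T : Finset (Fin (m + 1))) : (interA (coneArr H) T).Nonempty :=
    ⟨0, zero_mem_interA_coneArr T⟩
  simp only [IsAffCircuit, IsLinCircuit, circuitProp_iff, hne, true_and, ne_eq]

lemma interA_nonempty_iff {S : Finset (Fin m)} :
    (interA H S).Nonempty ↔
      normals (coneArr H) (Fin.last m) ∉
        span ℝ (normals (coneArr H) '' ↑(S.image Fin.castSucc)) := by
  simp only [notMem_span_iff_exists_dotProduct, Finset.coe_image, ← image_comp, forall_mem_image,
    Function.comp_apply, normals_coneArr_castSucc, normals_coneArr_last]
  constructor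
  · rintro ⟨x, hx⟩
    refine ⟨Fin.snoc x 1, fun i hi => ?_, by simp [snoc_dotProduct_snoc]⟩
    have hxi : (H i).a ⬝ᵥ x = (H i).b := mem_interA.1 hx i hi
    rw [snoc_dotProduct_snoc, hxi]
    ring
  · rintro ⟨y, hy, hlast⟩
    rw [← Fin.snoc_init_self y, snoc_dotProduct_snoc] at hlast
    refine ⟨(y (Fin.last n))⁻¹ • Fin.init y, mem_interA.2 fun i hi => ?_⟩
    have hyi := hy hi
    rw [← Fin.snoc_init_self y, snoc_dotProduct_snoc] at hyi
    change (H i).a ⬝ᵥ ((y (Fin.last n))⁻¹ • Fin.init y) = (H i).b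
    rw [dotProduct_smul, smul_eq_mul, inv_mul_eq_iff_eq_mul₀ (by simpa using hlast)]
    linarith

lemma linRank_normals_eq_linRank_coneArr {S : Finset (Fin m)} (hne : (interA H S).Nonempty) :
    linRank ℝ (normals H) S = linRank ℝ (normals (coneArr H)) (S.image Fin.castSucc) := by
  have he := interA_nonempty_iff.1 hne
  rw [normals_coneArr_last] at he
  rw [linRank, linRank, ← finrank_map_init_of_snoc_notMem he, map_span, Finset.coe_image,
    ← image_comp, ← image_comp]
  have hinit : (LinearMap.funLeft ℝ ℝ Fin.castSucc ∘ normals (coneArr H)) ∘ Fin.castSucc =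
      normals H := by
    funext i j
    simp only [Function.comp_apply, LinearMap.funLeft_apply, normals_coneArr_castSucc,
      Fin.snoc_castSucc]
    rfl
  rw [hinit]

lemma circuitProp_iff_coneArr {S : Finset (Fin m)} :
    CircuitProp H S ↔ (interA H S).Nonempty ∧
      (S.image Fin.castSucc).card = linRank ℝ (normals (coneArr H)) (S.image Fin.castSucc) + 1 := by
  rw [circuitProp_iff, Finset.card_image_of_injective S (Fin.castSucc_injective m)]
  exact and_congr_right fun hne => by rw [linRank_normals_eq_linRank_coneArr hne]

lemma isAffCircuit_iff_coneArr {C : Finset (Fin m)} :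
    IsAffCircuit H C ↔
      (interA H C).Nonempty ∧ IsLinCircuit ℝ (normals (coneArr H)) (C.image Fin.castSucc) := by
  have hinj := Fin.castSucc_injective m
  simp only [IsAffCircuit, IsLinCircuit, circuitProp_iff_coneArr]
  constructor
  · rintro ⟨⟨hne, hcard⟩, hmin⟩
    refine ⟨hne, hcard, fun D hD hD_card => ?_⟩
    obtain ⟨T, -, rfl⟩ := Finset.subset_image_iff.1 hD.subset
    have hTC : T ⊂ C := (Finset.image_ssubset_image hinj).1 hD
    exact hmin T hTC ⟨hne.mono (interA_anti H hTC.subset), hD_card⟩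
  · rintro ⟨hne, hcard, hmin⟩
    exact ⟨⟨hne, hcard⟩, fun T hT hT_circ =>
      hmin _ ((Finset.image_ssubset_image hinj).2 hT) hT_circ.2⟩

end Coning

section NBC

variable {n m : ℕ}

lemma IsAffNBC.anti {H : Fin m → Hyp n} {S T : Finset (Fin m)} (hT : IsAffNBC H T)
    (hST : S ⊆ T) : IsAffNBC H S :=
  ⟨hT.1.mono (interA_anti H hST), fun C hC hne hsub => hT.2 C hC hne (hsub.trans hST)⟩

lemma Finset.erase_max'_subset_of_subset_insert_last {C s : Finset (Fin (m + 1))}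
    (hne : C.Nonempty) (h : C.erase (C.max' hne) ⊆ insert (Fin.last m) s) :
    C.erase (C.max' hne) ⊆ s := by
  intro x hx
  refine (Finset.mem_insert.1 (h hx)).resolve_left fun hlast => Finset.ne_of_mem_erase hx ?_
  subst hlast
  exact (C.le_max' _ (Finset.mem_of_mem_erase hx)).antisymm (Fin.le_last _)

lemma Finset.erase_max'_image_castSucc {C : Finset (Fin m)}
    (hne : (C.image Fin.castSucc).Nonempty) :
    (C.image Fin.castSucc).erase ((C.image Fin.castSucc).max' hne) =
      (C.erase (C.max' hne.of_image)).image Fin.castSucc := by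
  rw [Finset.max'_image Fin.strictMono_castSucc.monotone,
    Finset.image_erase (Fin.castSucc_injective m)]

variable {H : Fin m → Hyp n} {S : Finset (Fin m)}

lemma IsAffNBC.coneArr_insert_last (hS : IsAffNBC H S) :
    IsAffNBC (coneArr H) (insert (Fin.last m) (S.image Fin.castSucc)) := by
  refine ⟨⟨0, zero_mem_interA_coneArr _⟩, fun C hC hne hsub => ?_⟩
  replace hsub := Finset.erase_max'_subset_of_subset_insert_last hne hsub
  rw [isAffCircuit_coneArr_iff] at hC
  by_cases hlast : normals (coneArr H) (Fin.last m) ∈ span ℝ (normals (coneArr H) '' C)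
  · rw [← hC.span_erase (C.max'_mem hne)] at hlast
    exact interA_nonempty_iff.1 hS.1 (span_mono (image_mono hsub) hlast)
  · obtain ⟨C₀, -, rfl⟩ := (Finset.subset_image_iff (s := Finset.univ)).1 fun j hj =>
      Finset.mem_image.2 ⟨_, Finset.mem_univ _, Fin.castSucc_castPred j
        fun h => hlast (subset_span (mem_image_of_mem _ (h ▸ hj)))⟩
    have hC₀ : IsAffCircuit H C₀ :=
      isAffCircuit_iff_coneArr.2 ⟨interA_nonempty_iff.2 hlast, hC⟩
    rw [Finset.erase_max'_image_castSucc,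
      Finset.image_subset_image_iff (Fin.castSucc_injective m)] at hsub
    exact hS.2 C₀ hC₀ _ hsub

lemma IsAffNBC.of_coneArr_insert_last
    (h : IsAffNBC (coneArr H) (insert (Fin.last m) (S.image Fin.castSucc))) : IsAffNBC H S := by
  refine ⟨interA_nonempty_iff.2 fun he => ?_, fun C hC hne hsub => ?_⟩
  · have hlast : Fin.last m ∉ S.image Fin.castSucc := by simp [Fin.castSucc_ne_last]
    have hdep : linRank ℝ (normals (coneArr H)) (insert (Fin.last m) (S.image Fin.castSucc)) <
        (insert (Fin.last m) (S.image Fin.castSucc)).card := by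
      rw [linRank_insert_of_mem_span he, Finset.card_insert_of_notMem hlast]
      exact Nat.lt_succ_of_le (linRank_le_card _)
    obtain ⟨C, hCD, hC⟩ := exists_isLinCircuit_subset hdep
    exact h.2 C (isAffCircuit_coneArr_iff.2 hC) hC.nonempty ((Finset.erase_subset _ _).trans hCD)
  · have hcone := isAffCircuit_coneArr_iff.2 (isAffCircuit_iff_coneArr.1 hC).2
    refine h.2 _ hcone (hne.image _) ?_
    rw [Finset.erase_max'_image_castSucc]
    exact (Finset.image_subset_image hsub).trans (Finset.subset_insert _ _)

end NBC

theorem stmt_17_general (n m : ℕ) (H : Fin m → Hyp n)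
    (S : Finset (Fin m)) :
    IsAffNBC H S ↔
      (IsAffNBC (coneArr H) (S.image Fin.castSucc) ∧
        IsAffNBC (coneArr H) (insert (Fin.last m) (S.image Fin.castSucc))) :=
  ⟨fun hS => ⟨hS.coneArr_insert_last.anti (Finset.subset_insert _ _), hS.coneArr_insert_last⟩,
    fun h => h.2.of_coneArr_insert_last⟩

/-- **Affine NBC subsets via the coning.** Order `𝒜` by `H₁ ≺ ⋯ ≺ H_m` and `c𝒜` by
`cH₁ ≺ ⋯ ≺ cH_m ≺ K₀`. For every `S ⊆ {1, …, m}`, the set `{H_i : i ∈ S}` is an affine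
NBC subset of `𝒜` if and only if both `{cH_i : i ∈ S}` and `{cH_i : i ∈ S} ∪ {K₀}` are
affine NBC subsets of `c𝒜`. -/
theorem stmt_17 (n m : ℕ) (H : Fin m → Hyp n)
    (hinj : Function.Injective fun i => (H i).carrier)
    (S : Finset (Fin m)) :
    IsAffNBC H S ↔
      (IsAffNBC (coneArr H) (S.image Fin.castSucc) ∧
        IsAffNBC (coneArr H) (insert (Fin.last m) (S.image Fin.castSucc))) :=
  stmt_17_general n m H S
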